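/- arXiv:1102.4744 — 2 statements merged into one kernel-verified Lean document; each statement's English description precedes it below -/
import Mathlib

section
/- Let λ > 0. Then the real number D = (2λ²+8λ+5)·J_{2+2/λ}(2/λ) − (λ+3)·J_{3+2/λ}(2/λ) is nonzero, and the sequence b_n/a_n converges as n → ∞ to ((2λ²+4λ+1)·J_{2+2/λ}(2/λ) − (λ+1)·J_{3+2/λ}(2/λ))/D. -/
/-! Write `J k = ladderJ λ k = J_{2/λ+k}(2/λ)`. The Bessel recurrence
`J k + J (k+2) = (λ(k+1)+2) J (k+1)` makes `n ↦ J n - J (n+1)` a solution of the recursion of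
`a` and `b`; comparing initial values gives `(J 0 - J 1) a n - (J 0 + J 1) b n = 2 (J n - J (n+1))`
for `n ≥ 1`, and the two Bessel expressions of the statement are `J 0 + J 1` and `J 0 - J 1`.
The `J k` are positive and decreasing: for large `k` this is read off the alternating series, and
since the coefficient of the recurrence is at least `2` it propagates down to `k = 0`. As `a n`
grows at least linearly, dividing by `(J 0 + J 1) a n` gives the limit. -/

open Real

/-- Bessel function of the first kind of real order `ν`, for real `z > 0`,
defined by the series `∑ (−1)^m / (m! Γ(m+ν+1)) (z/2)^(2m+ν)` (real powers). -/
noncomputable def besselJ (ν z : ℝ) : ℝ :=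
  ∑' m : ℕ, ((-1 : ℝ) ^ m / (m.factorial * Real.Gamma ((m : ℝ) + ν + 1)))
      * (z / 2) ^ (2 * (m : ℝ) + ν)

open Filter Topology

noncomputable def besselTerm (μ z : ℝ) (m : ℕ) : ℝ :=
  (z / 2) ^ (2 * (m : ℝ) + μ) / (m.factorial * Gamma ((m : ℝ) + μ + 1))

section Bessel

variable {μ z : ℝ}

lemma besselJ_eq_tsum : besselJ μ z = ∑' m : ℕ, (-1) ^ m * besselTerm μ z m := by
  unfold besselJ besselTerm
  congr 1 with m
  ring

lemma besselTerm_pos (hz : 0 < z) (hμ : -1 < μ) (m : ℕ) : 0 < besselTerm μ z m := by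
  have : 0 < Gamma ((m : ℝ) + μ + 1) :=
    Gamma_pos_of_pos (by linarith [m.cast_nonneg (α := ℝ)])
  unfold besselTerm
  positivity

lemma besselTerm_succ (hz : 0 < z) (hμ : -1 < μ) (m : ℕ) :
    besselTerm μ z (m + 1) = (z / 2) ^ 2 / ((m + 1) * (m + μ + 1)) * besselTerm μ z m := by
  have hm : (0 : ℝ) < m + μ + 1 := by linarith [m.cast_nonneg (α := ℝ)]
  have hG : Gamma ((m : ℝ) + μ + 1 + 1) = (m + μ + 1) * Gamma ((m : ℝ) + μ + 1) :=
    Gamma_add_one hm.ne'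
  have hpow :
      (z / 2) ^ (2 * ((m + 1 : ℕ) : ℝ) + μ) = (z / 2) ^ (2 * (m : ℝ) + μ) * (z / 2) ^ 2 := by
    rw [← rpow_natCast, ← rpow_add (by positivity)]
    push_cast
    ring_nf
  have : 0 < Gamma ((m : ℝ) + μ + 1) := Gamma_pos_of_pos hm
  unfold besselTerm
  rw [hpow, show ((m + 1 : ℕ) : ℝ) + μ + 1 = (m : ℝ) + μ + 1 + 1 by push_cast; ring, hG,
    Nat.factorial_succ]
  push_cast
  field_simp

lemma besselTerm_add_one (hz : 0 < z) (hμ : -1 < μ) (m : ℕ) :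
    besselTerm (μ + 1) z m = z / 2 / (m + μ + 1) * besselTerm μ z m := by
  have hm : (0 : ℝ) < m + μ + 1 := by linarith [m.cast_nonneg (α := ℝ)]
  have hG : Gamma ((m : ℝ) + μ + 1 + 1) = (m + μ + 1) * Gamma ((m : ℝ) + μ + 1) :=
    Gamma_add_one hm.ne'
  have hpow : (z / 2) ^ (2 * (m : ℝ) + (μ + 1)) = (z / 2) ^ (2 * (m : ℝ) + μ) * (z / 2) := by
    rw [← add_assoc, rpow_add_one (by positivity)]
  have : 0 < Gamma ((m : ℝ) + μ + 1) := Gamma_pos_of_pos hm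
  unfold besselTerm
  rw [hpow, ← add_assoc, hG]
  field_simp

lemma summable_besselTerm (hz : 0 < z) (hμ : -1 < μ) : Summable (besselTerm μ z) := by
  obtain ⟨N, hN⟩ := exists_nat_ge (2 * (z / 2) ^ 2)
  refine summable_of_ratio_norm_eventually_le (r := 1 / 2) (by norm_num) ?_
  filter_upwards [eventually_ge_atTop (N + 1)] with m hm
  have hm : (N : ℝ) + 1 ≤ m := by exact_mod_cast hm
  have ht := besselTerm_pos hz hμ m
  rw [Real.norm_of_nonneg (besselTerm_pos hz hμ _).le, Real.norm_of_nonneg ht.le,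
    besselTerm_succ hz hμ]
  refine mul_le_mul_of_nonneg_right ?_ ht.le
  rw [div_le_iff₀ (by nlinarith)]
  nlinarith

lemma besselTerm_antitone (hz : 0 < z) (hμ : -1 < μ) (h : (z / 2) ^ 2 ≤ μ + 1) :
    Antitone (besselTerm μ z) := by
  refine antitone_nat_of_succ_le fun m => ?_
  rw [besselTerm_succ hz hμ]
  refine mul_le_of_le_one_left (besselTerm_pos hz hμ m).le ?_
  have : (0 : ℝ) ≤ m := m.cast_nonneg
  rw [div_le_one (by nlinarith)]
  nlinarith

lemma besselJ_mem_Icc (hz : 0 < z) (hμ : -1 < μ) (h : (z / 2) ^ 2 ≤ μ + 1) :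
    besselJ μ z ∈ Set.Icc (besselTerm μ z 0 - besselTerm μ z 1) (besselTerm μ z 0) := by
  have hlim := (summable_besselTerm hz hμ).tendsto_alternating_series_tsum
  have hanti := besselTerm_antitone hz hμ h
  rw [← besselJ_eq_tsum] at hlim
  constructor
  · simpa [Finset.sum_range_succ, sub_eq_add_neg] using hanti.alternating_series_le_tendsto hlim 1
  · simpa using hanti.tendsto_le_alternating_series hlim 0

lemma besselJ_sub_one_add_besselJ_add_one (hz : 0 < z) (hμ : 0 < μ) :
    besselJ (μ - 1) z + besselJ (μ + 1) z = 2 * μ / z * besselJ μ z := by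
  have hμ' : -1 < μ - 1 := by linarith
  have hs : ∀ ν, -1 < ν → Summable fun m : ℕ => (-1) ^ m * besselTerm ν z m :=
    fun ν hν => (summable_besselTerm hz hν).alternating
  have hlow (m : ℕ) : besselTerm (μ - 1) z m = (m + μ) / (z / 2) * besselTerm μ z m := by
    have h := besselTerm_add_one hz hμ' m
    rw [sub_add_cancel, show (m : ℝ) + (μ - 1) + 1 = m + μ by ring] at h
    have : (0 : ℝ) < m + μ := by linarith [m.cast_nonneg (α := ℝ)]
    rw [h]
    field_simp
  have hhigh (m : ℕ) : besselTerm (μ + 1) z m = (m + 1) / (z / 2) * besselTerm μ z (m + 1) := by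
    have : (0 : ℝ) < m + μ + 1 := by linarith [m.cast_nonneg (α := ℝ)]
    rw [besselTerm_add_one hz (by linarith), besselTerm_succ hz (by linarith)]
    field_simp
  have hterm (m : ℕ) :
      (-1) ^ (m + 1) * besselTerm (μ - 1) z (m + 1) + (-1) ^ m * besselTerm (μ + 1) z m
        = 2 * μ / z * ((-1) ^ (m + 1) * besselTerm μ z (m + 1)) := by
    rw [hlow, hhigh]
    push_cast
    field_simp
    ring
  rw [besselJ_eq_tsum, besselJ_eq_tsum, besselJ_eq_tsum, (hs _ hμ').tsum_eq_zero_add,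
    ← tsum_mul_left, ((hs μ (by linarith)).mul_left _).tsum_eq_zero_add, add_assoc,
    ← ((summable_nat_add_iff 1).2 (hs _ hμ')).tsum_add (hs _ (by linarith)), hlow 0]
  simp only [hterm, pow_zero, one_mul, Nat.cast_zero, zero_add]
  congr 1
  field_simp

lemma besselJ_add_one_pos_and_le (hz : 0 < z) (hμ : -1 < μ) (h : z / 2 + (z / 2) ^ 2 ≤ μ + 1) :
    0 < besselJ (μ + 1) z ∧ besselJ (μ + 1) z ≤ besselJ μ z := by
  have hμ1 : 0 < μ + 1 := by linarith
  have hx : 0 < z / 2 := by positivity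
  obtain ⟨hlo, -⟩ := besselJ_mem_Icc hz hμ (by nlinarith)
  obtain ⟨hlo', hhi'⟩ := besselJ_mem_Icc hz (μ := μ + 1) (by linarith) (by nlinarith)
  have h1 : besselTerm μ z 1 = (z / 2) ^ 2 / (μ + 1) * besselTerm μ z 0 := by
    simpa using besselTerm_succ hz hμ 0
  have h2 : besselTerm (μ + 1) z 0 = z / 2 / (μ + 1) * besselTerm μ z 0 := by
    simpa using besselTerm_add_one hz hμ 0
  have h3 : besselTerm (μ + 1) z 1 = (z / 2) ^ 2 / (μ + 2) * besselTerm (μ + 1) z 0 := by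
    simpa [add_assoc, one_add_one_eq_two] using besselTerm_succ hz (μ := μ + 1) (by linarith) 0
  have hT := besselTerm_pos hz hμ 0
  have hT' := besselTerm_pos hz (μ := μ + 1) (by linarith) 0
  constructor
  · refine lt_of_lt_of_le ?_ hlo'
    rw [h3, sub_pos, div_mul_eq_mul_div, div_lt_iff₀ (by linarith)]
    nlinarith
  · refine hhi'.trans (le_trans ?_ hlo)
    rw [h1, h2]
    field_simp
    nlinarith

lemma besselJ_add_nat_recurrence (hz : 0 < z) (hμ : -1 < μ) (k : ℕ) :
    besselJ (μ + k) z + besselJ (μ + (k + 2 : ℕ)) z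
      = 2 * (μ + k + 1) / z * besselJ (μ + (k + 1 : ℕ)) z := by
  have := besselJ_sub_one_add_besselJ_add_one hz (μ := μ + (k + 1 : ℕ))
    (by push_cast; linarith [k.cast_nonneg (α := ℝ)])
  convert this using 3 <;> push_cast <;> ring

end Bessel

lemma pos_and_succ_le_of_recurrence {f c : ℕ → ℝ} (hc : ∀ k, 2 ≤ c k)
    (hrec : ∀ k, f k + f (k + 2) = c k * f (k + 1)) {N : ℕ}
    (hN : ∀ k, N ≤ k → 0 < f (k + 1) ∧ f (k + 1) ≤ f k) (k : ℕ) :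
    0 < f (k + 1) ∧ f (k + 1) ≤ f k := by
  induction hd : N - k generalizing k with
  | zero => exact hN k (by omega)
  | succ d ih =>
    obtain ⟨hpos, hle⟩ := ih (k + 1) (by omega)
    have := hrec k
    have := hc k
    exact ⟨hpos.trans_le hle, by nlinarith⟩

lemma besselJ_add_nat_pos_and_succ_le {ν z : ℝ} (hz : 0 < z) (hν : -1 < ν) (hzν : z ≤ ν + 1)
    (k : ℕ) :
    0 < besselJ (ν + (k + 1 : ℕ)) z ∧ besselJ (ν + (k + 1 : ℕ)) z ≤ besselJ (ν + k) z := by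
  obtain ⟨N, hN⟩ := exists_nat_ge (z / 2 + (z / 2) ^ 2)
  refine pos_and_succ_le_of_recurrence (f := fun k : ℕ => besselJ (ν + k) z)
    (c := fun k : ℕ => 2 * (ν + k + 1) / z) (fun k => ?_)
    (besselJ_add_nat_recurrence hz hν) (N := N) (fun k hk => ?_) k
  · rw [le_div_iff₀ hz]
    linarith [k.cast_nonneg (α := ℝ)]
  · have hk : (N : ℝ) ≤ k := by exact_mod_cast hk
    have := besselJ_add_one_pos_and_le hz (μ := ν + k) (by linarith [k.cast_nonneg (α := ℝ)])
      (by linarith)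
    simpa [add_assoc] using this

def LadderRec (l : ℝ) (x : ℕ → ℝ) : Prop :=
  ∀ n : ℕ, x (n + 4) = (l * (n + 4) + 3) * x (n + 3) - (l * (n + 2) + 3) * x (n + 2) + x (n + 1)

namespace LadderRec

variable {l : ℝ} {x y : ℕ → ℝ}

lemma of_forall_four_le (h : ∀ n : ℕ, 4 ≤ n →
      x n = (l * (n : ℝ) + 3) * x (n - 1) - (l * ((n : ℝ) - 2) + 3) * x (n - 2) + x (n - 3)) :
    LadderRec l x := by
  intro n
  have := h (n + 4) (by omega)
  simp only [show n + 4 - 2 = n + 2 by omega, show n + 4 - 3 = n + 1 by omega,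
    show n + 4 - 1 = n + 3 by omega] at this
  rw [this]
  push_cast
  ring

lemma const_mul (hx : LadderRec l x) (c : ℝ) : LadderRec l fun n => c * x n := by
  intro n
  linear_combination c * hx n

lemma sub (hx : LadderRec l x) (hy : LadderRec l y) : LadderRec l fun n => x n - y n := by
  intro n
  linear_combination hx n - hy n

lemma sub_succ_of_recurrence {f : ℕ → ℝ}
    (hf : ∀ k : ℕ, f k + f (k + 2) = (l * (k + 1) + 2) * f (k + 1)) :
    LadderRec l fun n => f n - f (n + 1) := by
  intro n
  have h1 := hf (n + 1)
  have h2 := hf (n + 2)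
  have h3 := hf (n + 3)
  push_cast at h1 h2 h3
  linear_combination -h1 + 2 * h2 - h3

lemma eq_of_eq_one_two_three (hx : LadderRec l x) (hy : LadderRec l y) (h1 : x 1 = y 1)
    (h2 : x 2 = y 2) (h3 : x 3 = y 3) (n : ℕ) : x (n + 1) = y (n + 1) := by
  suffices ∀ n, x (n + 1) = y (n + 1) ∧ x (n + 2) = y (n + 2) ∧ x (n + 3) = y (n + 3) from
    (this n).1
  intro n
  induction n with
  | zero => exact ⟨h1, h2, h3⟩
  | succ n ih =>
    obtain ⟨e1, e2, e3⟩ := ih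
    refine ⟨e2, e3, ?_⟩
    rw [hx n, hy n, e1, e2, e3]

lemma tendsto_atTop (hx : LadderRec l x) (hl : 0 ≤ l) (h1 : 0 < x 1) (h12 : x 1 < x 2)
    (h123 : x 2 - x 1 ≤ x 3 - x 2) : Tendsto x atTop atTop := by
  have hconv (m : ℕ) : 0 < x (m + 1) ∧ x (m + 1) < x (m + 2) ∧
      x (m + 2) - x (m + 1) ≤ x (m + 3) - x (m + 2) := by
    induction m with
    | zero => exact ⟨h1, h12, h123⟩
    | succ m ih =>
      obtain ⟨p, q, r⟩ := ih
      refine ⟨by linarith, by linarith, ?_⟩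
      -- with `Δ = x (m+2) - x (m+1) ≤ Δ' = x (m+3) - x (m+2)`, the recursion makes the next
      -- increment minus `Δ'` equal to `(l (m+2) + 1) Δ' - Δ + 2 l x (m+3) ≥ 0`
      rw [hx m]
      have : (0 : ℝ) ≤ m := m.cast_nonneg
      nlinarith [mul_nonneg (mul_nonneg hl (by linarith : (0 : ℝ) ≤ m + 2))
          (by linarith : 0 ≤ x (m + 3) - x (m + 2)),
        mul_nonneg hl (by linarith : 0 ≤ x (m + 3))]
  have hlin (m : ℕ) : x 1 + m * (x 2 - x 1) ≤ x (m + 1) := by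
    induction m with
    | zero => simp
    | succ m ih =>
      have hstep : x 2 - x 1 ≤ x (m + 2) - x (m + 1) :=
        monotone_nat_of_le_succ (f := fun m => x (m + 2) - x (m + 1)) (fun m => (hconv m).2.2)
          m.zero_le
      push_cast
      linarith
  refine (tendsto_add_atTop_iff_nat 1).1 (tendsto_atTop_mono hlin ?_)
  exact tendsto_atTop_add_const_left _ _ (tendsto_natCast_atTop_atTop.atTop_mul_const (by linarith))

end LadderRec

lemma tendsto_div_of_mul_sub_mul_bounded {ι : Type*} {L : Filter ι} {a b e : ι → ℝ}
    {p q C : ℝ} (hq : q ≠ 0) (ha : Tendsto a L atTop) (he : ∀ i, |e i| ≤ C)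
    (h : ∀ᶠ i in L, p * a i - q * b i = e i) :
    Tendsto (fun i => b i / a i) L (𝓝 (p / q)) := by
  have hea : Tendsto (fun i => (a i)⁻¹ * e i) L (𝓝 0) :=
    ha.inv_tendsto_atTop.zero_mul_isBoundedUnder_le (isBoundedUnder_of ⟨C, fun i => he i⟩)
  have hlim := (hea.div_const q).const_sub (p / q)
  rw [zero_div, sub_zero] at hlim
  refine hlim.congr' ?_
  filter_upwards [h, ha.eventually_gt_atTop 0] with i hi hai
  field_simp
  linear_combination hi

noncomputable def ladderJ (l : ℝ) (k : ℕ) : ℝ := besselJ (2 / l + k) (2 / l)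

section LadderJ

variable {l : ℝ}

lemma ladderJ_recurrence (hl : 0 < l) (k : ℕ) :
    ladderJ l k + ladderJ l (k + 2) = (l * (k + 1) + 2) * ladderJ l (k + 1) := by
  have hz : 0 < 2 / l := by positivity
  have := besselJ_add_nat_recurrence hz (by linarith) k
  rwa [show 2 * (2 / l + k + 1) / (2 / l) = l * (k + 1) + 2 by field_simp; ring] at this

lemma ladderJ_pos_and_succ_le (hl : 0 < l) (k : ℕ) :
    0 < ladderJ l (k + 1) ∧ ladderJ l (k + 1) ≤ ladderJ l k := by
  have hz : 0 < 2 / l := by positivity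
  exact besselJ_add_nat_pos_and_succ_le hz (by linarith) (by linarith) k

lemma abs_ladderJ_sub_succ_le (hl : 0 < l) (n : ℕ) :
    |ladderJ l n - ladderJ l (n + 1)| ≤ ladderJ l 0 := by
  obtain ⟨hpos, hle⟩ := ladderJ_pos_and_succ_le hl n
  have h0 : ladderJ l n ≤ ladderJ l 0 :=
    antitone_nat_of_succ_le (fun k => (ladderJ_pos_and_succ_le hl k).2) n.zero_le
  rw [abs_of_nonneg (by linarith)]
  linarith

lemma ladderJ_zero_add_one_pos (hl : 0 < l) : 0 < ladderJ l 0 + ladderJ l 1 := by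
  obtain ⟨hpos, hle⟩ := ladderJ_pos_and_succ_le hl 0
  simp only [zero_add] at hpos hle
  linarith

lemma besselJ_combinations_eq (hl : 0 < l) :
    (2 * l ^ 2 + 8 * l + 5) * besselJ (2 + 2 / l) (2 / l) - (l + 3) * besselJ (3 + 2 / l) (2 / l)
      = ladderJ l 0 + ladderJ l 1 ∧
    (2 * l ^ 2 + 4 * l + 1) * besselJ (2 + 2 / l) (2 / l) - (l + 1) * besselJ (3 + 2 / l) (2 / l)
      = ladderJ l 0 - ladderJ l 1 := by
  have h2 : besselJ (2 + 2 / l) (2 / l) = ladderJ l 2 := by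
    simp only [ladderJ, Nat.cast_ofNat, add_comm]
  have h3 : besselJ (3 + 2 / l) (2 / l) = ladderJ l 3 := by
    simp only [ladderJ, Nat.cast_ofNat, add_comm]
  have r0 := ladderJ_recurrence hl 0
  have r1 := ladderJ_recurrence hl 1
  push_cast at r0 r1
  rw [h2, h3]
  constructor
  · linear_combination (2 * l ^ 2 + 8 * l + 5 - (l + 3) * (2 * l + 2)) * r0 - (l + 3) * r1
  · linear_combination (2 * l ^ 2 + 4 * l + 1 - (l + 1) * (2 * l + 2)) * r0 - (l + 1) * r1

lemma LadderRec.ladderJ_mul_sub_mul {a b : ℕ → ℝ} (hl : 0 < l) (ha : LadderRec l a)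
    (hb : LadderRec l b) (ha1 : a 1 = 2 + l) (ha2 : a 2 = 2 * l ^ 2 + 7 * l + 2)
    (ha3 : a 3 = 6 * l ^ 3 + 26 * l ^ 2 + 22 * l + 2) (hb1 : b 1 = l)
    (hb2 : b 2 = 2 * l ^ 2 + 3 * l) (hb3 : b 3 = 6 * l ^ 3 + 14 * l ^ 2 + 6 * l) (n : ℕ) :
    (ladderJ l 0 - ladderJ l 1) * a (n + 1) - (ladderJ l 0 + ladderJ l 1) * b (n + 1)
      = 2 * (ladderJ l (n + 1) - ladderJ l (n + 2)) := by
  have r0 := ladderJ_recurrence hl 0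
  have r1 := ladderJ_recurrence hl 1
  have r2 := ladderJ_recurrence hl 2
  push_cast at r0 r1 r2
  refine ((ha.const_mul _).sub (hb.const_mul _)).eq_of_eq_one_two_three
    ((LadderRec.sub_succ_of_recurrence (ladderJ_recurrence hl)).const_mul 2) ?_ ?_ ?_ n
  · rw [ha1, hb1]
    linear_combination 2 * r0
  · rw [ha2, hb2]
    linear_combination (4 * l + 2) * r0 + 2 * r1
  · rw [ha3, hb3]
    linear_combination (12 * l ^ 2 + 16 * l + 2) * r0 + (6 * l + 2) * r1 + 2 * r2

end LadderJ

theorem stmt_7_general (l : ℝ) (hl : 0 < l)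
    (a b : ℕ → ℝ)
    (ha1 : a 1 = 2 + l) (ha2 : a 2 = 2 * l ^ 2 + 7 * l + 2)
    (ha3 : a 3 = 6 * l ^ 3 + 26 * l ^ 2 + 22 * l + 2)
    (hb1 : b 1 = l) (hb2 : b 2 = 2 * l ^ 2 + 3 * l)
    (hb3 : b 3 = 6 * l ^ 3 + 14 * l ^ 2 + 6 * l)
    (harec : ∀ n : ℕ, 4 ≤ n →
      a n = (l * (n : ℝ) + 3) * a (n - 1) - (l * ((n : ℝ) - 2) + 3) * a (n - 2)
            + a (n - 3))
    (hbrec : ∀ n : ℕ, 4 ≤ n →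
      b n = (l * (n : ℝ) + 3) * b (n - 1) - (l * ((n : ℝ) - 2) + 3) * b (n - 2)
            + b (n - 3)) :
    (2 * l ^ 2 + 8 * l + 5) * besselJ (2 + 2 / l) (2 / l)
        - (l + 3) * besselJ (3 + 2 / l) (2 / l) ≠ 0 ∧
    Filter.Tendsto (fun n : ℕ => b n / a n) Filter.atTop
      (nhds (((2 * l ^ 2 + 4 * l + 1) * besselJ (2 + 2 / l) (2 / l)
                - (l + 1) * besselJ (3 + 2 / l) (2 / l)) /
             ((2 * l ^ 2 + 8 * l + 5) * besselJ (2 + 2 / l) (2 / l)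
                - (l + 3) * besselJ (3 + 2 / l) (2 / l)))) := by
  obtain ⟨hD, hN⟩ := besselJ_combinations_eq hl
  have hDpos := ladderJ_zero_add_one_pos hl
  have ha := LadderRec.of_forall_four_le harec
  have hb := LadderRec.of_forall_four_le hbrec
  rw [hD, hN]
  refine ⟨hDpos.ne', tendsto_div_of_mul_sub_mul_bounded hDpos.ne' ?_
    (e := fun n => 2 * (ladderJ l n - ladderJ l (n + 1))) (C := 2 * ladderJ l 0)
    (fun n => ?_) (eventually_atTop.2 ⟨1, fun n hn => ?_⟩)⟩
  · exact ha.tendsto_atTop hl.le (by rw [ha1]; linarith) (by rw [ha1, ha2]; nlinarith)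
      (by rw [ha1, ha2, ha3]; nlinarith)
  · rw [abs_mul, abs_two]
    linarith [abs_ladderJ_sub_succ_le hl n]
  · obtain ⟨m, rfl⟩ := Nat.exists_eq_add_of_le' hn
    exact ha.ladderJ_mul_sub_mul hl hb ha1 ha2 ha3 hb1 hb2 hb3 m

/-- For `λ > 0`, with `a_n`, `b_n` as in the ladder recursion,
`D = (2λ²+8λ+5) J_{2+2/λ}(2/λ) − (λ+3) J_{3+2/λ}(2/λ)` is nonzero and
`b_n / a_n` converges to `((2λ²+4λ+1) J_{2+2/λ}(2/λ) − (λ+1) J_{3+2/λ}(2/λ)) / D`. -/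
theorem stmt_7 (l : ℝ) (hl : 0 < l)
    (a b : ℕ → ℝ)
    (ha0 : a 0 = 1) (ha1 : a 1 = 2 + l) (ha2 : a 2 = 2 * l ^ 2 + 7 * l + 2)
    (ha3 : a 3 = 6 * l ^ 3 + 26 * l ^ 2 + 22 * l + 2)
    (hb0 : b 0 = 0) (hb1 : b 1 = l) (hb2 : b 2 = 2 * l ^ 2 + 3 * l)
    (hb3 : b 3 = 6 * l ^ 3 + 14 * l ^ 2 + 6 * l)
    (harec : ∀ n : ℕ, 4 ≤ n →
      a n = (l * (n : ℝ) + 3) * a (n - 1) - (l * ((n : ℝ) - 2) + 3) * a (n - 2)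
            + a (n - 3))
    (hbrec : ∀ n : ℕ, 4 ≤ n →
      b n = (l * (n : ℝ) + 3) * b (n - 1) - (l * ((n : ℝ) - 2) + 3) * b (n - 2)
            + b (n - 3)) :
    (2 * l ^ 2 + 8 * l + 5) * besselJ (2 + 2 / l) (2 / l)
        - (l + 3) * besselJ (3 + 2 / l) (2 / l) ≠ 0 ∧
    Filter.Tendsto (fun n : ℕ => b n / a n) Filter.atTop
      (nhds (((2 * l ^ 2 + 4 * l + 1) * besselJ (2 + 2 / l) (2 / l)
                - (l + 1) * besselJ (3 + 2 / l) (2 / l)) /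
             ((2 * l ^ 2 + 8 * l + 5) * besselJ (2 + 2 / l) (2 / l)
                - (l + 3) * besselJ (3 + 2 / l) (2 / l)))) :=
  stmt_7_general l hl a b ha1 ha2 ha3 hb1 hb2 hb3 harec hbrec
end

section
/- For λ = 0, the sequence d_n/c_n converges as n → ∞ to (J_0(√2) − J_1(√2)/√2)/(3·J_1(√2)/√2 − J_0(√2)). -/
open Filter Topology Finset Nat

noncomputable def besselCoeff (n : ℕ) (t : ℝ) (m : ℕ) : ℝ := t ^ m / (m ! * (m + n)!)

noncomputable def besselSeries (n : ℕ) (t : ℝ) : ℝ := ∑' m, (-1) ^ m * besselCoeff n t m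

lemma abs_besselCoeff_le (n : ℕ) (t : ℝ) (m : ℕ) : |besselCoeff n t m| ≤ |t| ^ m / m ! := by
  have hpos : (0 : ℝ) < m ! * (m + n)! := by positivity
  rw [besselCoeff, abs_div, abs_pow, abs_of_pos hpos]
  gcongr
  exact le_mul_of_one_le_right (by positivity) (Nat.one_le_cast.mpr (m + n).factorial_pos)

lemma norm_neg_one_pow_mul_besselCoeff_le (n : ℕ) (t : ℝ) (m : ℕ) :
    ‖(-1) ^ m * besselCoeff n t m‖ ≤ |t| ^ m / m ! := by
  simpa using abs_besselCoeff_le n t m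

lemma summable_besselCoeff (n : ℕ) (t : ℝ) : Summable (besselCoeff n t) :=
  .of_norm_bounded (Real.summable_pow_div_factorial |t|) (abs_besselCoeff_le n t)

lemma abs_besselSeries_le (n : ℕ) (t : ℝ) : |besselSeries n t| ≤ Real.exp |t| := by
  rw [Real.exp_eq_exp_ℝ]
  exact tsum_of_norm_bounded (NormedSpace.expSeries_div_hasSum_exp |t|)
    (norm_neg_one_pow_mul_besselCoeff_le n t)

lemma antitone_besselCoeff (n : ℕ) {t : ℝ} (ht₀ : 0 ≤ t) (ht₁ : t ≤ 1) :
    Antitone (besselCoeff n t) := by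
  refine antitone_nat_of_succ_le fun m => ?_
  refine div_le_div₀ (by positivity) (pow_le_pow_of_le_one ht₀ ht₁ m.le_succ) (by positivity) ?_
  gcongr <;> omega

lemma abs_besselSeries_sub_sum_le (n : ℕ) {t : ℝ} (ht₀ : 0 ≤ t) (ht₁ : t ≤ 1) (k : ℕ) :
    |besselSeries n t - ∑ m ∈ range k, (-1) ^ m * besselCoeff n t m| ≤ besselCoeff n t k :=
  alternating_series_error_bound _ (antitone_besselCoeff n ht₀ ht₁) (summable_besselCoeff n t) k

lemma besselCoeff_succ_sub (n : ℕ) (t : ℝ) (m : ℕ) :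
    besselCoeff n t (m + 1) - (n + 1) * besselCoeff (n + 1) t (m + 1) =
      t * besselCoeff (n + 2) t m := by
  simp only [besselCoeff, show m + 1 + n = m + n + 1 by ring,
    show m + 1 + (n + 1) = m + n + 2 by ring, show m + (n + 2) = m + n + 2 by ring,
    Nat.factorial_succ]
  push_cast
  field_simp
  ring

lemma besselSeries_eq_sub_tsum (n : ℕ) (t : ℝ) :
    besselSeries n t = 1 / (n ! : ℝ) - ∑' m, (-1) ^ m * besselCoeff n t (m + 1) := by
  rw [besselSeries, (summable_besselCoeff n t).alternating.tsum_eq_zero_add]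
  simp [besselCoeff, pow_succ, tsum_neg, sub_eq_add_neg]

theorem besselSeries_recurrence (n : ℕ) (t : ℝ) :
    t * besselSeries (n + 2) t = (n + 1) * besselSeries (n + 1) t - besselSeries n t := by
  have hsum (k : ℕ) : Summable fun m => (-1) ^ m * besselCoeff k t (m + 1) :=
    ((summable_besselCoeff k t).comp_injective (add_left_injective 1)).alternating
  have htail : ∑' m, t * ((-1) ^ m * besselCoeff (n + 2) t m) =
      ∑' m, (-1) ^ m * besselCoeff n t (m + 1) -
        (n + 1) * ∑' m, (-1) ^ m * besselCoeff (n + 1) t (m + 1) := by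
    rw [← tsum_mul_left, ← (hsum n).tsum_sub ((hsum (n + 1)).mul_left _)]
    congr with m
    linear_combination -(-1) ^ m * besselCoeff_succ_sub n t m
  rw [besselSeries_eq_sub_tsum n, besselSeries_eq_sub_tsum (n + 1), besselSeries, ← tsum_mul_left,
    htail, Nat.factorial_succ]
  push_cast
  field_simp
  ring

theorem besselJ_natCast (n : ℕ) (z : ℝ) :
    besselJ n z = (z / 2) ^ n * besselSeries n ((z / 2) ^ 2) := by
  rw [besselJ, besselSeries, ← tsum_mul_left]
  refine tsum_congr fun m => ?_
  have hΓ : Real.Gamma ((m : ℝ) + n + 1) = (m + n)! := by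
    exact_mod_cast Real.Gamma_nat_eq_factorial (m + n)
  have hpow : (z / 2) ^ (2 * (m : ℝ) + n) = ((z / 2) ^ 2) ^ m * (z / 2) ^ n := by
    rw [← pow_mul, ← pow_add, ← Real.rpow_natCast]
    push_cast
    ring_nf
  rw [hΓ, hpow, besselCoeff]
  ring

def SatisfiesRec (x : ℕ → ℝ) : Prop :=
  ∀ n : ℕ, 4 ≤ n →
    x n = (2 * (n : ℝ) + 3) * x (n - 1) - (2 * ((n : ℝ) - 2) + 4) * x (n - 2) + 2 * x (n - 3)

theorem satisfiesRec_iff {x : ℕ → ℝ} :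
    SatisfiesRec x ↔
      ∀ k : ℕ, x (k + 4) = (2 * k + 11) * x (k + 3) - (2 * k + 8) * x (k + 2) + 2 * x (k + 1) := by
  refine ⟨fun hx k => ?_, fun hx n hn => ?_⟩
  · have := hx (k + 4) (by omega)
    simp only [show k + 4 - 1 = k + 3 by omega, show k + 4 - 2 = k + 2 by omega,
      show k + 4 - 3 = k + 1 by omega] at this
    rw [this]; push_cast; ring
  · obtain ⟨k, rfl⟩ : ∃ k, n = k + 4 := ⟨n - 4, by omega⟩
    simp only [show k + 4 - 1 = k + 3 by omega, show k + 4 - 2 = k + 2 by omega,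
      show k + 4 - 3 = k + 1 by omega]
    rw [hx k]; push_cast; ring

namespace SatisfiesRec

variable {x y : ℕ → ℝ}

theorem sub (hx : SatisfiesRec x) (hy : SatisfiesRec y) : SatisfiesRec (x - y) := by
  rw [satisfiesRec_iff] at *
  intro k
  simp only [Pi.sub_apply, hx k, hy k]
  ring

theorem const_mul (a : ℝ) (hx : SatisfiesRec x) : SatisfiesRec fun n => a * x n := by
  rw [satisfiesRec_iff] at *
  intro k
  simp only [hx k]
  ring

theorem eq_zero (hx : SatisfiesRec x) (h₁ : x 1 = 0) (h₂ : x 2 = 0) (h₃ : x 3 = 0)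
    {n : ℕ} (hn : 1 ≤ n) : x n = 0 := by
  rw [satisfiesRec_iff] at hx
  have key : ∀ k, x (k + 1) = 0 ∧ x (k + 2) = 0 ∧ x (k + 3) = 0 := by
    intro k
    induction k with
    | zero => exact ⟨h₁, h₂, h₃⟩
    | succ k ih => exact ⟨ih.2.1, ih.2.2, by rw [hx k, ih.1, ih.2.1, ih.2.2]; ring⟩
  obtain ⟨k, rfl⟩ : ∃ k, n = k + 1 := ⟨n - 1, by omega⟩
  exact (key k).1

theorem three_mul_le (hx : SatisfiesRec x) (h₁ : 0 ≤ x 1) (h₂ : x 1 ≤ x 2) (h₃ : x 2 ≤ x 3)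
    (k : ℕ) : 3 * x (k + 3) ≤ x (k + 4) := by
  rw [satisfiesRec_iff] at hx
  have key : ∀ k, 0 ≤ x (k + 1) ∧ x (k + 1) ≤ x (k + 2) ∧ x (k + 2) ≤ x (k + 3) := by
    intro k
    induction k with
    | zero => exact ⟨h₁, h₂, h₃⟩
    | succ k ih =>
      obtain ⟨ih₁, ih₂, ih₃⟩ := ih
      refine ⟨by linarith, ih₃, ?_⟩
      rw [show k + 1 + 3 = k + 4 by ring, hx k]
      nlinarith [mul_le_mul_of_nonneg_left ih₃ (by positivity : (0 : ℝ) ≤ 2 * k + 8)]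
  obtain ⟨hk₁, hk₂, hk₃⟩ := key k
  rw [hx k]
  nlinarith [mul_le_mul_of_nonneg_left hk₃ (by positivity : (0 : ℝ) ≤ 2 * k + 8)]

theorem tendsto_atTop (hx : SatisfiesRec x) (h₁ : 0 ≤ x 1) (h₂ : x 1 ≤ x 2) (h₃ : x 2 ≤ x 3)
    (h₃pos : 0 < x 3) : Tendsto x atTop atTop := by
  have hpow : ∀ k : ℕ, 3 ^ k * x 3 ≤ x (k + 3) := by
    intro k
    induction k with
    | zero => simp
    | succ k ih =>
      calc 3 ^ (k + 1) * x 3 = 3 * (3 ^ k * x 3) := by ring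
        _ ≤ 3 * x (k + 3) := by linarith
        _ ≤ x (k + 1 + 3) := hx.three_mul_le h₁ h₂ h₃ k
  rw [← tendsto_add_atTop_iff_nat 3]
  exact tendsto_atTop_mono hpow
    ((tendsto_pow_atTop_atTop_of_one_lt (by norm_num : (1 : ℝ) < 3)).atTop_mul_const h₃pos)

end SatisfiesRec

theorem satisfiesRec_sub_of_recurrence {F : ℕ → ℝ}
    (hF : ∀ n : ℕ, F (n + 2) = 2 * (n + 1) * F (n + 1) - 2 * F n) :
    SatisfiesRec fun n => F (n + 2) - F (n + 1) := by
  rw [satisfiesRec_iff]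
  intro k
  have h₂ := hF (k + 2)
  have h₃ := hF (k + 3)
  have h₄ := hF (k + 4)
  push_cast at h₂ h₃ h₄
  linear_combination h₄ - 2 * h₃ + h₂

theorem tendsto_div_of_isBoundedUnder_sub {c d : ℕ → ℝ} {a : ℝ} (hc : Tendsto c atTop atTop)
    (hb : IsBoundedUnder (· ≤ ·) atTop fun n => |d n - a * c n|) :
    Tendsto (fun n => d n / c n) atTop (𝓝 a) := by
  rw [← tendsto_sub_nhds_zero_iff]
  have h := hc.inv_tendsto_atTop.zero_mul_isBoundedUnder_le hb
  refine h.congr' ?_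
  filter_upwards [hc.eventually_gt_atTop 0] with n hn
  rw [Pi.inv_apply]
  field_simp

theorem mul_sub_mul_eq_of_recurrence {F c d : ℕ → ℝ}
    (hF : ∀ n : ℕ, F (n + 2) = 2 * (n + 1) * F (n + 1) - 2 * F n)
    (hc : SatisfiesRec c) (hd : SatisfiesRec d)
    (hc1 : c 1 = 5) (hc2 : c 2 = 28) (hc3 : c 3 = 226)
    (hd1 : d 1 = 1) (hd2 : d 2 = 8) (hd3 : d 3 = 66) {n : ℕ} (hn : 1 ≤ n) :
    (3 * F 1 - 2 * F 0) * d n - (2 * F 0 - F 1) * c n = 2 * (F (n + 2) - F (n + 1)) := by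
  have hw := ((hd.const_mul (3 * F 1 - 2 * F 0)).sub (hc.const_mul (2 * F 0 - F 1))).sub
    ((satisfiesRec_sub_of_recurrence hF).const_mul 2)
  have h₂ := hF 0
  have h₃ := hF 1
  have h₄ := hF 2
  have h₅ := hF 3
  norm_num at h₂ h₃ h₄ h₅
  have := hw.eq_zero (by simp only [Pi.sub_apply, hc1, hd1]; linarith)
    (by simp only [Pi.sub_apply, hc2, hd2]; linarith)
    (by simp only [Pi.sub_apply, hc3, hd3]; linarith) hn
  simp only [Pi.sub_apply] at this
  linarith

lemma sqrt_two_div_two_sq : (Real.sqrt 2 / 2) ^ 2 = 1 / 2 := by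
  rw [div_pow, Real.sq_sqrt zero_le_two]
  norm_num

lemma besselJ_zero_sqrt_two : besselJ 0 (Real.sqrt 2) = besselSeries 0 (1 / 2) := by
  simpa [sqrt_two_div_two_sq] using besselJ_natCast 0 (Real.sqrt 2)

lemma besselJ_one_sqrt_two :
    besselJ 1 (Real.sqrt 2) = Real.sqrt 2 / 2 * besselSeries 1 (1 / 2) := by
  simpa [sqrt_two_div_two_sq] using besselJ_natCast 1 (Real.sqrt 2)

lemma two_mul_besselSeries_zero_lt_three_mul_besselSeries_one :
    2 * besselSeries 0 (1 / 2) < 3 * besselSeries 1 (1 / 2) := by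
  have h₀ := abs_besselSeries_sub_sum_le 0 (t := 1 / 2) (by norm_num) (by norm_num) 2
  have h₁ := abs_besselSeries_sub_sum_le 1 (t := 1 / 2) (by norm_num) (by norm_num) 2
  norm_num [besselCoeff, Finset.sum_range_succ, Nat.factorial, abs_le] at h₀ h₁
  linarith

lemma besselJ_sqrt_two_ratio :
    (besselJ 0 (Real.sqrt 2) - besselJ 1 (Real.sqrt 2) / Real.sqrt 2) /
        (3 * besselJ 1 (Real.sqrt 2) / Real.sqrt 2 - besselJ 0 (Real.sqrt 2)) =
      (2 * besselSeries 0 (1 / 2) - besselSeries 1 (1 / 2)) /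
        (3 * besselSeries 1 (1 / 2) - 2 * besselSeries 0 (1 / 2)) := by
  have : Real.sqrt 2 ≠ 0 := by positivity
  rw [besselJ_zero_sqrt_two, besselJ_one_sqrt_two, ← mul_div_mul_left _ _ two_ne_zero]
  congr 1 <;> field_simp

theorem stmt_19_general (c d : ℕ → ℝ)
    (hc1 : c 1 = 5) (hc2 : c 2 = 28) (hc3 : c 3 = 226)
    (hd1 : d 1 = 1) (hd2 : d 2 = 8) (hd3 : d 3 = 66)
    (hcrec : ∀ n : ℕ, 4 ≤ n →
      c n = (2 * (n : ℝ) + 3) * c (n - 1) - (2 * ((n : ℝ) - 2) + 4) * c (n - 2)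
            + 2 * c (n - 3))
    (hdrec : ∀ n : ℕ, 4 ≤ n →
      d n = (2 * (n : ℝ) + 3) * d (n - 1) - (2 * ((n : ℝ) - 2) + 4) * d (n - 2)
            + 2 * d (n - 3)) :
    Filter.Tendsto (fun n : ℕ => d n / c n) Filter.atTop
      (nhds ((besselJ 0 (Real.sqrt 2) - besselJ 1 (Real.sqrt 2) / Real.sqrt 2) /
        (3 * besselJ 1 (Real.sqrt 2) / Real.sqrt 2 - besselJ 0 (Real.sqrt 2)))) := by
  rw [besselJ_sqrt_two_ratio]
  set F : ℕ → ℝ := fun n => besselSeries n (1 / 2)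
  have hF (n : ℕ) : F (n + 2) = 2 * (n + 1) * F (n + 1) - 2 * F n := by
    linear_combination 2 * besselSeries_recurrence n (1 / 2)
  have hD : 0 < 3 * F 1 - 2 * F 0 := by
    linarith [two_mul_besselSeries_zero_lt_three_mul_besselSeries_one]
  refine tendsto_div_of_isBoundedUnder_sub
    (SatisfiesRec.tendsto_atTop hcrec (by norm_num [hc1]) (by norm_num [hc1, hc2])
      (by norm_num [hc2, hc3]) (by norm_num [hc3]))
    (isBoundedUnder_of_eventually_le (a := 4 * Real.exp (1 / 2) / (3 * F 1 - 2 * F 0)) ?_)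
  filter_upwards [eventually_ge_atTop 1] with n hn
  have hrepr : d n - (2 * F 0 - F 1) / (3 * F 1 - 2 * F 0) * c n =
      2 * (F (n + 2) - F (n + 1)) / (3 * F 1 - 2 * F 0) := by
    rw [eq_div_iff hD.ne', ← mul_sub_mul_eq_of_recurrence hF hcrec hdrec hc1 hc2 hc3 hd1 hd2 hd3 hn,
      sub_mul, div_mul_eq_mul_div, div_mul_cancel₀ _ hD.ne']
    ring
  have hF₂ := abs_besselSeries_le (n + 2) (1 / 2)
  have hF₁ := abs_besselSeries_le (n + 1) (1 / 2)
  rw [hrepr, abs_div, abs_of_pos hD]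
  gcongr
  rw [abs_mul, abs_two]
  norm_num at hF₁ hF₂ ⊢
  linarith [abs_sub (F (n + 2)) (F (n + 1))]

/-- For `λ = 0` (so `c₀=1, c₁=5, c₂=28, c₃=226`, `d₀=0, d₁=1, d₂=8, d₃=66`
and `x_n = (2n+3)x_{n−1} − (2(n−2)+4)x_{n−2} + 2x_{n−3}` for `n ≥ 4`),
`d_n/c_n → (J₀(√2) − J₁(√2)/√2)/(3J₁(√2)/√2 − J₀(√2))` as `n → ∞`. -/
theorem stmt_19 (c d : ℕ → ℝ)
    (hc0 : c 0 = 1) (hc1 : c 1 = 5) (hc2 : c 2 = 28) (hc3 : c 3 = 226)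
    (hd0 : d 0 = 0) (hd1 : d 1 = 1) (hd2 : d 2 = 8) (hd3 : d 3 = 66)
    (hcrec : ∀ n : ℕ, 4 ≤ n →
      c n = (2 * (n : ℝ) + 3) * c (n - 1) - (2 * ((n : ℝ) - 2) + 4) * c (n - 2)
            + 2 * c (n - 3))
    (hdrec : ∀ n : ℕ, 4 ≤ n →
      d n = (2 * (n : ℝ) + 3) * d (n - 1) - (2 * ((n : ℝ) - 2) + 4) * d (n - 2)
            + 2 * d (n - 3)) :
    Filter.Tendsto (fun n : ℕ => d n / c n) Filter.atTop
      (nhds ((besselJ 0 (Real.sqrt 2) - besselJ 1 (Real.sqrt 2) / Real.sqrt 2) /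
        (3 * besselJ 1 (Real.sqrt 2) / Real.sqrt 2 - besselJ 0 (Real.sqrt 2)))) :=
  stmt_19_general c d hc1 hc2 hc3 hd1 hd2 hd3 hcrec hdrec
end
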